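/- arXiv:2011.12726 — 3 statements merged into one kernel-verified Lean document; each statement's English description precedes it below -/
import Mathlib

section
/- Let G be the discrete-time LTI system with matrices (A, B, C, D) where A is Schur–Cohn stable (spectral radius strictly less than 1). Suppose there exist γ > 0, a positive semidefinite matrix P ∈ ℝ^{n×n}, and a copositive matrix Q ∈ ℝ^{n_w×n_w} such that L(A, B, C, D, P, Q, γ) is negative definite. Then the positive l2 induced norm satisfies ‖G‖_{2+} < γ; that is, there exists γ̃ < γ such that ‖z‖_2 ≤ γ̃‖w‖_2 for every square-summable input w with w(k) entrywise nonnegative for all k. -/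
open Matrix

noncomputable section

/-- A symmetric matrix is copositive if its quadratic form is nonnegative on the
nonnegative orthant. -/
def Copositive {q : Type*} [Fintype q] (Q : Matrix q q ℝ) : Prop :=
  Q.IsSymm ∧ ∀ x : q → ℝ, (∀ i, 0 ≤ x i) → 0 ≤ x ⬝ᵥ Q.mulVec x

/-- The matrix L(A,B,C,D,P,Q,γ). -/
def Lmat {n w z : Type*} [Fintype n] [Fintype w] [Fintype z]
    [DecidableEq n] [DecidableEq w] [DecidableEq z]
    (A : Matrix n n ℝ) (B : Matrix n w ℝ) (C : Matrix z n ℝ) (D : Matrix z w ℝ)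
    (P : Matrix n n ℝ) (Q : Matrix w w ℝ) (γ : ℝ) : Matrix (n ⊕ w) (n ⊕ w) ℝ :=
  Matrix.fromBlocks (-P) 0 0 ((-(γ ^ 2)) • (1 : Matrix w w ℝ) + Q)
    + (Matrix.fromBlocks A B C D)ᵀ * Matrix.fromBlocks P 0 0 (1 : Matrix z z ℝ)
      * Matrix.fromBlocks A B C D

/-- State of the LTI system x(k+1) = A x(k) + B w(k), x(0) = 0. -/
def ltiState {n w : Type*} [Fintype n] [Fintype w]
    (A : Matrix n n ℝ) (B : Matrix n w ℝ) (ws : ℕ → w → ℝ) : ℕ → n → ℝ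
  | 0 => 0
  | k + 1 => A.mulVec (ltiState A B ws k) + B.mulVec (ws k)

/-- Output z(k) = C x(k) + D w(k). -/
def ltiOutput {n w z : Type*} [Fintype n] [Fintype w] [Fintype z]
    (A : Matrix n n ℝ) (B : Matrix n w ℝ) (C : Matrix z n ℝ) (D : Matrix z w ℝ)
    (ws : ℕ → w → ℝ) (k : ℕ) : z → ℝ :=
  C.mulVec (ltiState A B ws k) + D.mulVec (ws k)

/-- l2 norm of a discrete-time signal. -/
def sigNorm {w : Type*} [Fintype w] (u : ℕ → w → ℝ) : ℝ :=
  Real.sqrt (∑' k, ∑ i, (u k i) ^ 2)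

/-- Euclidean norm of a vector. -/
def vecNorm {ι : Type*} [Fintype ι] (v : ι → ℝ) : ℝ :=
  Real.sqrt (∑ i, (v i) ^ 2)

/-- The positive l2 induced norm of the system (A,B,C,D). -/
def posL2Gain {n w z : Type*} [Fintype n] [Fintype w] [Fintype z]
    (A : Matrix n n ℝ) (B : Matrix n w ℝ) (C : Matrix z n ℝ) (D : Matrix z w ℝ) : ℝ :=
  sSup {c : ℝ | ∃ ws : ℕ → w → ℝ, (∀ k i, 0 ≤ ws k i) ∧
    Summable (fun k => ∑ i, (ws k i) ^ 2) ∧ sigNorm ws = 1 ∧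
    c = sigNorm (ltiOutput A B C D ws)}

/-- The l2 induced norm of the system (A,B,C,D). -/
def l2Gain {n w z : Type*} [Fintype n] [Fintype w] [Fintype z]
    (A : Matrix n n ℝ) (B : Matrix n w ℝ) (C : Matrix z n ℝ) (D : Matrix z w ℝ) : ℝ :=
  sSup {c : ℝ | ∃ ws : ℕ → w → ℝ,
    Summable (fun k => ∑ i, (ws k i) ^ 2) ∧ sigNorm ws = 1 ∧
    c = sigNorm (ltiOutput A B C D ws)}

/-- Schur–Cohn stability: the spectral radius (over ℂ) is < 1. -/
def SchurStable {n : Type*} [Fintype n] [DecidableEq n] (A : Matrix n n ℝ) : Prop :=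
  spectralRadius ℂ (A.map (algebraMap ℝ ℂ)) < 1

/-- Lifted A matrix. -/
def liftA {n : Type*} [Fintype n] [DecidableEq n] (A : Matrix n n ℝ) (N : ℕ) :
    Matrix n n ℝ := A ^ N

/-- Lifted B matrix. -/
def liftB {n w : Type*} [Fintype n] [DecidableEq n]
    (A : Matrix n n ℝ) (B : Matrix n w ℝ) (N : ℕ) : Matrix n (Fin N × w) ℝ :=
  Matrix.of fun r c => (A ^ (N - 1 - (c.1 : ℕ)) * B) r c.2

/-- Lifted C matrix. -/
def liftC {n z : Type*} [Fintype n] [DecidableEq n]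
    (A : Matrix n n ℝ) (C : Matrix z n ℝ) (N : ℕ) : Matrix (Fin N × z) n ℝ :=
  Matrix.of fun r c => (C * A ^ (r.1 : ℕ)) r.2 c

/-- Lifted D matrix. -/
def liftD {n w z : Type*} [Fintype n] [DecidableEq n]
    (A : Matrix n n ℝ) (B : Matrix n w ℝ) (C : Matrix z n ℝ) (D : Matrix z w ℝ)
    (N : ℕ) : Matrix (Fin N × z) (Fin N × w) ℝ :=
  Matrix.of fun r c =>
    if (r.1 : ℕ) = (c.1 : ℕ) then D r.2 c.2
    else if (c.1 : ℕ) < (r.1 : ℕ) then (C * A ^ ((r.1 : ℕ) - (c.1 : ℕ) - 1) * B) r.2 c.2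
    else 0

/-- ReLU. -/
def relu {ι : Type*} (ξ : ι → ℝ) : ι → ℝ := fun i => max (ξ i) 0

/-- Positive maximal singular value. -/
def matPosNorm {ι κ : Type*} [Fintype ι] [Fintype κ] (M : Matrix ι κ ℝ) : ℝ :=
  sSup {c : ℝ | ∃ v : κ → ℝ, (∀ i, 0 ≤ v i) ∧ vecNorm v = 1 ∧ c = vecNorm (M.mulVec v)}

/-- Maximal singular value (spectral norm). -/
def matNorm {ι κ : Type*} [Fintype ι] [Fintype κ] (M : Matrix ι κ ℝ) : ℝ :=
  sSup {c : ℝ | ∃ v : κ → ℝ, vecNorm v = 1 ∧ c = vecNorm (M.mulVec v)}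

/-!
Dissipation argument with the storage function `V x = xᵀ P x`. Testing `-L ≥ ε I` at the vector
`(x(k), w(k))` and dropping the term `w(k)ᵀ Q w(k) ≥ 0` (copositivity, as `w(k) ≥ 0`) gives
`V (x(k+1)) + |z(k)|² ≤ V (x(k)) + (γ² - ε) |w(k)|²`. Summing telescopes from `V (x 0) = 0`,
and `V ≥ 0` yields `‖z‖₂² ≤ (γ² - ε) ‖w‖₂²`.
-/

open Finset

theorem Matrix.PosDef.exists_pos_mul_dotProduct_self_le {m : Type*} [Fintype m]
    {M : Matrix m m ℝ} (hM : M.PosDef) :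
    ∃ ε > 0, ∀ x : m → ℝ, ε * (x ⬝ᵥ x) ≤ x ⬝ᵥ M *ᵥ x := by
  let q : EuclideanSpace ℝ m → ℝ := fun y => y.ofLp ⬝ᵥ M *ᵥ y.ofLp
  have hq : Continuous q := by fun_prop
  obtain ⟨ε, hε, hεq⟩ := (isCompact_sphere (0 : EuclideanSpace ℝ m) 1).exists_forall_le'
    hq.continuousOn (a := 0) fun y hy => by
      have hy0 : y.ofLp ≠ 0 := fun h => by simp_all
      simpa using hM.dotProduct_mulVec_pos hy0
  refine ⟨ε, hε, fun x => ?_⟩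
  rcases eq_or_ne x 0 with rfl | hx
  · simp
  set y := WithLp.toLp 2 x
  have hy : 0 < ‖y‖ := by simpa [y] using hx
  have hxx : x ⬝ᵥ x = ‖y‖ ^ 2 := by
    rw [← real_inner_self_eq_norm_sq, EuclideanSpace.inner_toLp_toLp, star_trivial]
  have hmin := hεq (‖y‖⁻¹ • y) (by simp [norm_smul, hy.ne'])
  have hscale : q (‖y‖⁻¹ • y) = (‖y‖ ^ 2)⁻¹ * (x ⬝ᵥ M *ᵥ x) := by
    simp only [q, WithLp.ofLp_smul, mulVec_smul, smul_dotProduct, dotProduct_smul, smul_eq_mul, y]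
    ring
  rwa [hscale, le_inv_mul_iff₀ (pow_pos hy 2), ← hxx, mul_comm] at hmin

section Dissipation

variable {n w z : Type*} [Fintype n] [Fintype w] [Fintype z]
  [DecidableEq n] [DecidableEq w] [DecidableEq z]
  (A : Matrix n n ℝ) (B : Matrix n w ℝ) (C : Matrix z n ℝ) (D : Matrix z w ℝ)
  (P : Matrix n n ℝ) (Q : Matrix w w ℝ) (γ : ℝ)

theorem sumElim_dotProduct_Lmat_mulVec_sumElim (x : n → ℝ) (u : w → ℝ) :
    Sum.elim x u ⬝ᵥ Lmat A B C D P Q γ *ᵥ Sum.elim x u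
      = (A *ᵥ x + B *ᵥ u) ⬝ᵥ P *ᵥ (A *ᵥ x + B *ᵥ u)
        + (C *ᵥ x + D *ᵥ u) ⬝ᵥ (C *ᵥ x + D *ᵥ u)
        - x ⬝ᵥ P *ᵥ x - γ ^ 2 * (u ⬝ᵥ u) + u ⬝ᵥ Q *ᵥ u := by
  have hABCD : fromBlocks A B C D *ᵥ Sum.elim x u
      = Sum.elim (A *ᵥ x + B *ᵥ u) (C *ᵥ x + D *ᵥ u) := by
    simp [fromBlocks_mulVec]
  rw [Lmat, add_mulVec, dotProduct_add, Matrix.mul_assoc, ← mulVec_mulVec, ← mulVec_mulVec,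
    dotProduct_mulVec _ (fromBlocks A B C D)ᵀ, vecMul_transpose, hABCD,
    fromBlocks_mulVec, fromBlocks_mulVec]
  simp only [Sum.elim_comp_inl, Sum.elim_comp_inr, zero_mulVec, add_zero, zero_add,
    one_mulVec, add_mulVec, smul_mulVec, neg_mulVec, sumElim_dotProduct_sumElim,
    dotProduct_add, dotProduct_smul, dotProduct_neg, smul_eq_mul]
  ring

variable {A B C D P Q γ}

theorem storage_step_le {ε : ℝ} (hε : 0 ≤ ε) (hQ : Copositive Q)
    (hL : ∀ v, ε * (v ⬝ᵥ v) ≤ v ⬝ᵥ (-Lmat A B C D P Q γ) *ᵥ v)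
    (x : n → ℝ) {u : w → ℝ} (hu : ∀ i, 0 ≤ u i) :
    (A *ᵥ x + B *ᵥ u) ⬝ᵥ P *ᵥ (A *ᵥ x + B *ᵥ u) + (C *ᵥ x + D *ᵥ u) ⬝ᵥ (C *ᵥ x + D *ᵥ u)
      ≤ x ⬝ᵥ P *ᵥ x + (γ ^ 2 - ε) * (u ⬝ᵥ u) := by
  have hLxu := hL (Sum.elim x u)
  rw [neg_mulVec, dotProduct_neg, sumElim_dotProduct_Lmat_mulVec_sumElim,
    sumElim_dotProduct_sumElim] at hLxu
  have hx : 0 ≤ ε * (x ⬝ᵥ x) := mul_nonneg hε (by simpa using dotProduct_star_self_nonneg x)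
  have hQu : 0 ≤ u ⬝ᵥ Q *ᵥ u := hQ.2 u hu
  linarith

theorem storage_add_sum_output_le {ε : ℝ} (hε : 0 ≤ ε) (hQ : Copositive Q)
    (hL : ∀ v, ε * (v ⬝ᵥ v) ≤ v ⬝ᵥ (-Lmat A B C D P Q γ) *ᵥ v)
    {ws : ℕ → w → ℝ} (hws : ∀ k i, 0 ≤ ws k i) (N : ℕ) :
    ltiState A B ws N ⬝ᵥ P *ᵥ ltiState A B ws N
        + ∑ k ∈ range N, ltiOutput A B C D ws k ⬝ᵥ ltiOutput A B C D ws k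
      ≤ (γ ^ 2 - ε) * ∑ k ∈ range N, ws k ⬝ᵥ ws k := by
  induction N with
  | zero => simp [ltiState]
  | succ N ih =>
    have hstep := storage_step_le hε hQ hL (ltiState A B ws N) (hws N)
    have hz : ltiOutput A B C D ws N = C *ᵥ ltiState A B ws N + D *ᵥ ws N := rfl
    rw [sum_range_succ, sum_range_succ, mul_add, ltiState, hz]
    linarith

end Dissipation

theorem sigNorm_le_sqrt_mul_of_forall_sum_range_le {ι κ : Type*} [Fintype ι] [Fintype κ]
    {u : ℕ → ι → ℝ} {v : ℕ → κ → ℝ} {c : ℝ} (hc : 0 ≤ c)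
    (hv : Summable fun k => ∑ i, v k i ^ 2)
    (h : ∀ N, ∑ k ∈ range N, u k ⬝ᵥ u k ≤ c * ∑ k ∈ range N, v k ⬝ᵥ v k) :
    sigNorm u ≤ √c * sigNorm v := by
  simp only [dotProduct, ← sq] at h
  rw [sigNorm, sigNorm, ← Real.sqrt_mul hc]
  refine Real.sqrt_le_sqrt (Real.tsum_le_of_sum_range_le (fun k => by positivity) fun N => ?_)
  exact (h N).trans (mul_le_mul_of_nonneg_left (hv.sum_le_tsum _ fun k _ => by positivity) hc)

theorem stmt_0_general (n nw nz : ℕ)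
    (A : Matrix (Fin n) (Fin n) ℝ) (B : Matrix (Fin n) (Fin nw) ℝ)
    (C : Matrix (Fin nz) (Fin n) ℝ) (D : Matrix (Fin nz) (Fin nw) ℝ)
    (γ : ℝ) (P : Matrix (Fin n) (Fin n) ℝ) (Q : Matrix (Fin nw) (Fin nw) ℝ)
    (hγ : 0 < γ) (hP : P.PosSemidef) (hQ : Copositive Q)
    (hL : (-(Lmat A B C D P Q γ)).PosDef) :
    ∃ γ' : ℝ, γ' < γ ∧ ∀ ws : ℕ → Fin nw → ℝ, (∀ k i, 0 ≤ ws k i) →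
      Summable (fun k => ∑ i, (ws k i) ^ 2) →
      sigNorm (ltiOutput A B C D ws) ≤ γ' * sigNorm ws := by
  obtain ⟨ε, hε, hεL⟩ := hL.exists_pos_mul_dotProduct_self_le
  -- `δ < γ²` keeps `γ² - δ` positive, so that `√(γ² - δ) < γ`
  set δ := min ε (γ ^ 2 / 2)
  have hδ : 0 < δ := lt_min hε (by positivity)
  have hδγ : δ < γ ^ 2 := (min_le_right _ _).trans_lt (by linarith [pow_pos hγ 2])
  have hδL : ∀ v, δ * (v ⬝ᵥ v) ≤ v ⬝ᵥ (-Lmat A B C D P Q γ) *ᵥ v := fun v =>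
    (mul_le_mul_of_nonneg_right (min_le_left _ _)
      (by simpa using dotProduct_star_self_nonneg v)).trans (hεL v)
  refine ⟨√(γ ^ 2 - δ), ?_, fun ws hws hsum => ?_⟩
  · calc √(γ ^ 2 - δ) < √(γ ^ 2) := Real.sqrt_lt_sqrt (by linarith) (by linarith)
      _ = γ := Real.sqrt_sq hγ.le
  refine sigNorm_le_sqrt_mul_of_forall_sum_range_le (by linarith) hsum fun N => ?_
  have hV := hP.dotProduct_mulVec_nonneg (ltiState A B ws N)
  have hEnergy := storage_add_sum_output_le hδ.le hQ hδL hws N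
  simp only [star_trivial] at hV
  linarith

/-- if the LMI L(A,B,C,D,P,Q,γ) ≺ 0 holds with P positive semidefinite and
Q copositive, then the positive l2 induced norm of G is < γ. -/
theorem stmt_0 (n nw nz : ℕ)
    (A : Matrix (Fin n) (Fin n) ℝ) (B : Matrix (Fin n) (Fin nw) ℝ)
    (C : Matrix (Fin nz) (Fin n) ℝ) (D : Matrix (Fin nz) (Fin nw) ℝ)
    (γ : ℝ) (P : Matrix (Fin n) (Fin n) ℝ) (Q : Matrix (Fin nw) (Fin nw) ℝ)
    (hA : SchurStable A) (hγ : 0 < γ) (hP : P.PosSemidef) (hQ : Copositive Q)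
    (hL : (-(Lmat A B C D P Q γ)).PosDef) :
    ∃ γ' : ℝ, γ' < γ ∧ ∀ ws : ℕ → Fin nw → ℝ, (∀ k i, 0 ≤ ws k i) →
      Summable (fun k => ∑ i, (ws k i) ^ 2) →
      sigNorm (ltiOutput A B C D ws) ≤ γ' * sigNorm ws :=
  stmt_0_general n nw nz A B C D γ P Q hγ hP hQ hL

end
end

section
/- Let (Â_N, B̂_N, Ĉ_N, D̂_N) be the N-th order lifted matrices of (A, B, C, D), let γ > 0, let P ∈ ℝ^{n×n} be positive semidefinite, and let Q ∈ ℝ^{Nn_w×Nn_w} be copositive with L(Â_N, B̂_N, Ĉ_N, D̂_N, P, Q, γ) ≺ 0. Then for every p ∈ ℕ, the block-diagonal matrix Q_p := diag(Q, …, Q) (p copies) is copositive and L(Â_{pN}, B̂_{pN}, Ĉ_{pN}, D̂_{pN}, P, Q_p, γ) ≺ 0. -/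
/-! Along a trajectory `x (t+1) = A x t + B w t`, `z t = C x t + D w t`, the quadratic form of
`Lmat` for the `M`-th lifted system at `(x 0, (w 0, …, w (M-1)))` is the dissipation balance
`x Mᵀ P x M - x 0ᵀ P x 0 + ∑ t < M, (|z t|² - γ² |w t|²) + wᵀ Q w` over a window of length `M`.
For `M = p N` and `diag(Q, …, Q)` this balance is the sum of the `p` balances of the consecutive
windows of length `N` started at the states `x (N i)`: the `P`-terms telescope and the `Q`-term
splits blockwise. By the `N`-lifted LMI every window balance is `≤ 0`, and it is `< 0` on the
first window if `x 0 ≠ 0` and otherwise on a window carrying a nonzero input. -/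

open Matrix

noncomputable section

/-- Identification of `p` copies of a stacked index block with one stacked index block:
`((k, j), i) ↦ (i * N + k, j)`, i.e. the `i`-th copy occupies the `i`-th group of `N`
consecutive block-rows/columns. -/
def blockCopyEquiv (p N : ℕ) (w : Type*) : ((Fin N × w) × Fin p) ≃ (Fin (p * N) × w) :=
  ((Equiv.prodComm (Fin N × w) (Fin p)).trans
      (Equiv.prodAssoc (Fin p) (Fin N) w).symm).trans
    (Equiv.prodCongr finProdFinEquiv (Equiv.refl w))

open Finset

theorem Finset.sum_range_mul_eq_sum_sum {M : Type*} [AddCommMonoid M] (f : ℕ → M) (p N : ℕ) :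
    ∑ t ∈ range (p * N), f t = ∑ i ∈ range p, ∑ k ∈ range N, f (N * i + k) := by
  induction p with
  | zero => simp
  | succ p ih => rw [Nat.succ_mul, sum_range_add, ih, sum_range_succ, mul_comm p N]

section Trajectory

variable {n w z : Type*} [Fintype n] [Fintype w]
  (A : Matrix n n ℝ) (B : Matrix n w ℝ) (C : Matrix z n ℝ) (D : Matrix z w ℝ)

def stateFrom (x : n → ℝ) (u : ℕ → w → ℝ) : ℕ → n → ℝ
  | 0 => x
  | t + 1 => A *ᵥ stateFrom x u t + B *ᵥ u t

def outputFrom [Fintype z] (x : n → ℝ) (u : ℕ → w → ℝ) (t : ℕ) : z → ℝ :=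
  C *ᵥ stateFrom A B x u t + D *ᵥ u t

theorem stateFrom_add (x : n → ℝ) (u : ℕ → w → ℝ) (s t : ℕ) :
    stateFrom A B x u (s + t) = stateFrom A B (stateFrom A B x u s) (fun k => u (s + k)) t := by
  induction t with
  | zero => rfl
  | succ t ih => rw [← add_assoc, stateFrom, ih, stateFrom]

theorem outputFrom_add [Fintype z] (x : n → ℝ) (u : ℕ → w → ℝ) (s t : ℕ) :
    outputFrom A B C D x u (s + t)
      = outputFrom A B C D (stateFrom A B x u s) (fun k => u (s + k)) t := by
  rw [outputFrom, outputFrom, stateFrom_add]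

variable [DecidableEq n]

theorem stateFrom_eq_sum (x : n → ℝ) (u : ℕ → w → ℝ) (t : ℕ) :
    stateFrom A B x u t = A ^ t *ᵥ x + ∑ k ∈ range t, (A ^ (t - 1 - k) * B) *ᵥ u k := by
  induction t with
  | zero => simp [stateFrom]
  | succ t ih =>
    have hstep : ∀ k ∈ range t, A *ᵥ ((A ^ (t - 1 - k) * B) *ᵥ u k) = (A ^ (t - k) * B) *ᵥ u k :=
      fun k hk => by
        rw [mulVec_mulVec, ← Matrix.mul_assoc, ← pow_succ',
          show t - 1 - k + 1 = t - k by grind]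
    rw [stateFrom, ih, sum_range_succ, Nat.add_sub_cancel, Nat.sub_self, pow_zero, Matrix.one_mul,
      pow_succ', ← mulVec_mulVec, mulVec_add, mulVec_sum, sum_congr rfl hstep, add_assoc]

end Trajectory

section Window

variable {w : Type*}

def window (u : ℕ → w → ℝ) (M : ℕ) : Fin M × w → ℝ := fun c => u c.1 c.2

theorem window_dotProduct_window [Fintype w] (f g : ℕ → w → ℝ) (M : ℕ) :
    window f M ⬝ᵥ window g M = ∑ t ∈ range M, f t ⬝ᵥ g t := by
  simp only [dotProduct, window, Fintype.sum_prod_type]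
  exact Fin.sum_univ_eq_sum_range (fun t => ∑ j, f t j * g t j) M

theorem exists_window_eq {M : ℕ} (v : Fin M × w → ℝ) : ∃ u, window u M = v :=
  ⟨fun t j => if h : t < M then v (⟨t, h⟩, j) else 0, by ext ⟨t, j⟩; simp [window]⟩

theorem exists_window_ne_zero {p N : ℕ} {u : ℕ → w → ℝ} (hu : window u (p * N) ≠ 0) :
    ∃ i ∈ range p, window (fun k => u (N * i + k)) N ≠ 0 := by
  obtain ⟨⟨t, j⟩, ht⟩ := Function.ne_iff.1 hu
  have hN : 0 < N := Nat.pos_of_mul_pos_left t.pos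
  refine ⟨t / N, mem_range.2 (Nat.div_lt_of_lt_mul (t.2.trans_eq (mul_comm p N))),
    Function.ne_iff.2 ⟨(⟨t % N, Nat.mod_lt _ hN⟩, j), ?_⟩⟩
  simpa [window, Nat.div_add_mod] using ht

end Window

section Lift

variable {n w z : Type*} [Fintype n] [Fintype w] [DecidableEq n]
  (A : Matrix n n ℝ) (B : Matrix n w ℝ) (C : Matrix z n ℝ) (D : Matrix z w ℝ)

theorem liftA_mulVec_add_liftB_mulVec (M : ℕ) (x : n → ℝ) (u : ℕ → w → ℝ) :
    liftA A M *ᵥ x + liftB A B M *ᵥ window u M = stateFrom A B x u M := by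
  rw [stateFrom_eq_sum, liftA]
  congr 1
  ext r
  simp only [mulVec, dotProduct, liftB, window, of_apply, Fintype.sum_prod_type, Finset.sum_apply]
  exact Fin.sum_univ_eq_sum_range (fun k => ∑ j, (A ^ (M - 1 - k) * B) r j * u k j) M

theorem liftD_mulVec_window_apply (M : ℕ) (u : ℕ → w → ℝ) (t : Fin M) (j : z) :
    (liftD A B C D M *ᵥ window u M) (t, j)
      = (∑ k ∈ range t, (C * A ^ ((t : ℕ) - 1 - k) * B) *ᵥ u k) j + (D *ᵥ u t) j := by
  have hsplit : ∀ k : Fin M, ∑ j', liftD A B C D M (t, j) (k, j') * u k j'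
      = (if (k : ℕ) < t then ((C * A ^ ((t : ℕ) - 1 - k) * B) *ᵥ u k) j else 0)
        + (if (t : ℕ) = k then (D *ᵥ u k) j else 0) := fun k => by
    simp only [liftD, of_apply, mulVec, dotProduct, Nat.sub_right_comm (t : ℕ) k 1]
    split_ifs <;> first | omega | simp
  have hfilter : (range M).filter (· < (t : ℕ)) = range t := by
    ext k; simp only [mem_filter, mem_range]; omega
  calc (liftD A B C D M *ᵥ window u M) (t, j)
      = ∑ k : Fin M, ∑ j', liftD A B C D M (t, j) (k, j') * u k j' := Fintype.sum_prod_type _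
    _ = _ := by
      rw [sum_congr rfl fun k _ => hsplit k, sum_add_distrib,
        Fin.sum_univ_eq_sum_range
          (fun k => if k < (t : ℕ) then ((C * A ^ ((t : ℕ) - 1 - k) * B) *ᵥ u k) j else 0),
        Fin.sum_univ_eq_sum_range (fun k => if (t : ℕ) = k then (D *ᵥ u k) j else 0),
        ← sum_filter, hfilter, sum_ite_eq, if_pos (mem_range.2 t.2), Finset.sum_apply]

theorem liftC_mulVec_add_liftD_mulVec [Fintype z] (M : ℕ) (x : n → ℝ) (u : ℕ → w → ℝ) :
    liftC A C M *ᵥ x + liftD A B C D M *ᵥ window u M = window (outputFrom A B C D x u) M := by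
  ext ⟨t, j⟩
  have hC : (liftC A C M *ᵥ x) (t, j) = (C *ᵥ (A ^ (t : ℕ) *ᵥ x)) j := by
    rw [mulVec_mulVec]; rfl
  rw [Pi.add_apply, hC, liftD_mulVec_window_apply, window, outputFrom, stateFrom_eq_sum]
  simp only [mulVec_add, mulVec_sum, mulVec_mulVec, Matrix.mul_assoc, Pi.add_apply]
  ring

end Lift

section LMI

variable {n w z : Type*} [Fintype n] [Fintype w] [Fintype z]
  (A : Matrix n n ℝ) (B : Matrix n w ℝ) (C : Matrix z n ℝ) (D : Matrix z w ℝ)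
  (P : Matrix n n ℝ) (Q : Matrix w w ℝ) (γ : ℝ)

def lmiForm (x : n → ℝ) (u : w → ℝ) : ℝ :=
  (A *ᵥ x + B *ᵥ u) ⬝ᵥ P *ᵥ (A *ᵥ x + B *ᵥ u) - x ⬝ᵥ P *ᵥ x
    + (C *ᵥ x + D *ᵥ u) ⬝ᵥ (C *ᵥ x + D *ᵥ u) - γ ^ 2 * (u ⬝ᵥ u) + u ⬝ᵥ Q *ᵥ u

variable [DecidableEq n] [DecidableEq w] [DecidableEq z]

theorem sumElim_dotProduct_Lmat_mulVec (x : n → ℝ) (u : w → ℝ) :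
    Sum.elim x u ⬝ᵥ Lmat A B C D P Q γ *ᵥ Sum.elim x u = lmiForm A B C D P Q γ x u := by
  have hABCD : fromBlocks A B C D *ᵥ Sum.elim x u
      = Sum.elim (A *ᵥ x + B *ᵥ u) (C *ᵥ x + D *ᵥ u) := by
    simp [fromBlocks_mulVec]
  rw [Lmat, add_mulVec, dotProduct_add, Matrix.mul_assoc, ← mulVec_mulVec,
    dotProduct_mulVec _ (fromBlocks A B C D)ᵀ, vecMul_transpose, hABCD, ← mulVec_mulVec, hABCD]
  simp only [fromBlocks_mulVec, Sum.elim_comp_inl, Sum.elim_comp_inr, zero_mulVec, add_zero,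
    zero_add, one_mulVec, add_mulVec, smul_mulVec, neg_mulVec, sumElim_dotProduct_sumElim,
    dotProduct_add, dotProduct_neg, dotProduct_smul, smul_eq_mul, lmiForm]
  ring

variable {P Q}

theorem Lmat_isSymm (hP : P.IsSymm) (hQ : Q.IsSymm) : (Lmat A B C D P Q γ).IsSymm := by
  rw [Matrix.IsSymm, Lmat]
  simp only [transpose_add, transpose_mul, transpose_transpose, fromBlocks_transpose,
    transpose_neg, transpose_smul, transpose_one, transpose_zero, hP.eq, hQ.eq, Matrix.mul_assoc]

theorem lmiForm_nonpos (hL : (-Lmat A B C D P Q γ).PosDef) (x : n → ℝ) (u : w → ℝ) :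
    lmiForm A B C D P Q γ x u ≤ 0 := by
  have hnonneg := hL.posSemidef.dotProduct_mulVec_nonneg (Sum.elim x u)
  rw [star_trivial, neg_mulVec, dotProduct_neg, sumElim_dotProduct_Lmat_mulVec] at hnonneg
  linarith

theorem posDef_neg_Lmat_iff (hP : P.IsSymm) (hQ : Q.IsSymm) :
    (-Lmat A B C D P Q γ).PosDef ↔
      ∀ x u, (x ≠ 0 ∨ u ≠ 0) → lmiForm A B C D P Q γ x u < 0 := by
  have hquad : ∀ x u, Sum.elim x u ⬝ᵥ (-Lmat A B C D P Q γ) *ᵥ Sum.elim x u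
      = -lmiForm A B C D P Q γ x u := fun x u => by
    rw [neg_mulVec, dotProduct_neg, sumElim_dotProduct_Lmat_mulVec]
  have hne : ∀ x : n → ℝ, ∀ u : w → ℝ, Sum.elim x u ≠ 0 ↔ (x ≠ 0 ∨ u ≠ 0) := fun x u => by
    rw [Ne, ← Sum.elim_zero_zero, Sum.elim_eq_iff, not_and_or]
  constructor
  · intro hL x u hxu
    have hpos := hL.dotProduct_mulVec_pos ((hne x u).2 hxu)
    rw [star_trivial, hquad] at hpos
    linarith
  · intro h
    refine PosDef.of_dotProduct_mulVec_pos
      (isHermitian_iff_isSymm.2 (Lmat_isSymm A B C D γ hP hQ).neg) fun v hv => ?_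
    rw [star_trivial, ← Sum.elim_comp_inl_inr v, hquad]
    rw [← Sum.elim_comp_inl_inr v, hne] at hv
    linarith [h _ _ hv]

end LMI

section BlockDiagonal

variable {R α β ι : Type*} [CommSemiring R] [Fintype α] [Fintype β] [Fintype ι] [DecidableEq ι]

theorem dotProduct_reindex_mulVec (e : α ≃ β) (M : Matrix α α R) (y : β → R) :
    y ⬝ᵥ reindex e e M *ᵥ y = (y ∘ e) ⬝ᵥ M *ᵥ (y ∘ e) := by
  rw [reindex_apply, submatrix_mulVec_equiv, dotProduct, ← e.sum_comp]
  simp [dotProduct]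

theorem dotProduct_blockDiagonal_mulVec (d : ι → Matrix α α R) (y : α × ι → R) :
    y ⬝ᵥ blockDiagonal d *ᵥ y = ∑ i, (fun a => y (a, i)) ⬝ᵥ d i *ᵥ fun a => y (a, i) := by
  simp only [dotProduct, mulVec, Fintype.sum_prod_type, blockDiagonal_apply, mul_sum, ite_mul,
    zero_mul, sum_ite_eq, mem_univ, if_true]
  exact sum_comm

end BlockDiagonal

theorem Copositive.reindex_blockDiagonal {α β ι : Type*} [Fintype α] [Fintype β] [Fintype ι]
    [DecidableEq ι] {Q : Matrix α α ℝ} (hQ : Copositive Q) (e : α × ι ≃ β) :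
    Copositive (reindex e e (blockDiagonal fun _ : ι => Q)) := by
  refine ⟨?_, fun y hy => ?_⟩
  · rw [IsSymm, transpose_reindex, blockDiagonal_transpose, hQ.1.eq]
  · rw [dotProduct_reindex_mulVec, dotProduct_blockDiagonal_mulVec]
    exact sum_nonneg fun i _ => hQ.2 _ fun a => hy _

theorem window_dotProduct_blockCopy_mulVec {w : Type*} [Fintype w] {p N : ℕ}
    (Q : Matrix (Fin N × w) (Fin N × w) ℝ) (u : ℕ → w → ℝ) :
    window u (p * N) ⬝ᵥ reindex (blockCopyEquiv p N w) (blockCopyEquiv p N w)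
        (blockDiagonal fun _ : Fin p => Q) *ᵥ window u (p * N)
      = ∑ i ∈ range p,
          window (fun k => u (N * i + k)) N ⬝ᵥ Q *ᵥ window (fun k => u (N * i + k)) N := by
  have hblock : ∀ i : Fin p, (fun c => (window u (p * N) ∘ blockCopyEquiv p N w) (c, i))
      = window (fun k => u (N * i + k)) N := fun i => by
    ext ⟨k, j⟩
    simp [window, blockCopyEquiv, add_comm]
  rw [dotProduct_reindex_mulVec, dotProduct_blockDiagonal_mulVec, sum_congr rfl fun i _ => by
    rw [hblock i]]
  exact Fin.sum_univ_eq_sum_range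
    (fun i => window (fun k => u (N * i + k)) N ⬝ᵥ Q *ᵥ window (fun k => u (N * i + k)) N) p

section Dissipation

variable {n w z : Type*} [Fintype n] [Fintype w] [Fintype z] [DecidableEq n]
  (A : Matrix n n ℝ) (B : Matrix n w ℝ) (C : Matrix z n ℝ) (D : Matrix z w ℝ)
  (P : Matrix n n ℝ) (γ : ℝ)

theorem lmiForm_lift (M : ℕ) (Q : Matrix (Fin M × w) (Fin M × w) ℝ) (x : n → ℝ)
    (u : ℕ → w → ℝ) :
    lmiForm (liftA A M) (liftB A B M) (liftC A C M) (liftD A B C D M) P Q γ x (window u M)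
      = stateFrom A B x u M ⬝ᵥ P *ᵥ stateFrom A B x u M - x ⬝ᵥ P *ᵥ x
        + ∑ t ∈ range M,
            (outputFrom A B C D x u t ⬝ᵥ outputFrom A B C D x u t - γ ^ 2 * (u t ⬝ᵥ u t))
        + window u M ⬝ᵥ Q *ᵥ window u M := by
  rw [lmiForm, liftA_mulVec_add_liftB_mulVec, liftC_mulVec_add_liftD_mulVec,
    window_dotProduct_window, window_dotProduct_window, sum_sub_distrib, mul_sum]
  ring

theorem lmiForm_lift_mul (p N : ℕ) (Q : Matrix (Fin N × w) (Fin N × w) ℝ) (x : n → ℝ)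
    (u : ℕ → w → ℝ) :
    lmiForm (liftA A (p * N)) (liftB A B (p * N)) (liftC A C (p * N)) (liftD A B C D (p * N)) P
        (reindex (blockCopyEquiv p N w) (blockCopyEquiv p N w) (blockDiagonal fun _ : Fin p => Q))
        γ x (window u (p * N))
      = ∑ i ∈ range p, lmiForm (liftA A N) (liftB A B N) (liftC A C N) (liftD A B C D N) P Q γ
          (stateFrom A B x u (N * i)) (window (fun k => u (N * i + k)) N) := by
  set V := fun i => stateFrom A B x u (N * i) ⬝ᵥ P *ᵥ stateFrom A B x u (N * i)
  have hblock : ∀ i, lmiForm (liftA A N) (liftB A B N) (liftC A C N) (liftD A B C D N) P Q γ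
      (stateFrom A B x u (N * i)) (window (fun k => u (N * i + k)) N)
      = V (i + 1) - V i + ∑ k ∈ range N, (outputFrom A B C D x u (N * i + k)
            ⬝ᵥ outputFrom A B C D x u (N * i + k) - γ ^ 2 * (u (N * i + k) ⬝ᵥ u (N * i + k)))
        + window (fun k => u (N * i + k)) N ⬝ᵥ Q *ᵥ window (fun k => u (N * i + k)) N := by
    intro i
    simp only [lmiForm_lift, ← stateFrom_add, ← outputFrom_add, V, mul_add_one]
  rw [sum_congr rfl fun i _ => hblock i, sum_add_distrib, sum_add_distrib, sum_range_sub,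
    lmiForm_lift, window_dotProduct_blockCopy_mulVec, sum_range_mul_eq_sum_sum]
  simp only [V, mul_zero, mul_comm p N, stateFrom]

end Dissipation

theorem stmt_4_general (n nw nz : ℕ)
    (A : Matrix (Fin n) (Fin n) ℝ) (B : Matrix (Fin n) (Fin nw) ℝ)
    (C : Matrix (Fin nz) (Fin n) ℝ) (D : Matrix (Fin nz) (Fin nw) ℝ)
    (N : ℕ) (γ : ℝ)
    (P : Matrix (Fin n) (Fin n) ℝ) (hP : P.PosSemidef)
    (Q : Matrix (Fin N × Fin nw) (Fin N × Fin nw) ℝ) (hQ : Copositive Q)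
    (hL : (-(Lmat (liftA A N) (liftB A B N) (liftC A C N) (liftD A B C D N)
        P Q γ)).PosDef) :
    ∀ p : ℕ, 0 < p →
      Copositive (Matrix.reindex (blockCopyEquiv p N (Fin nw)) (blockCopyEquiv p N (Fin nw))
          (Matrix.blockDiagonal fun _ : Fin p => Q)) ∧
      (-(Lmat (liftA A (p * N)) (liftB A B (p * N)) (liftC A C (p * N))
          (liftD A B C D (p * N)) P
          (Matrix.reindex (blockCopyEquiv p N (Fin nw)) (blockCopyEquiv p N (Fin nw))
            (Matrix.blockDiagonal fun _ : Fin p => Q)) γ)).PosDef := by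
  intro p hp
  have hPsymm : P.IsSymm := isHermitian_iff_isSymm.1 hP.1
  have hQp := hQ.reindex_blockDiagonal (ι := Fin p) (blockCopyEquiv p N (Fin nw))
  have hblock_neg := (posDef_neg_Lmat_iff _ _ _ _ γ hPsymm hQ.1).1 hL
  refine ⟨hQp, (posDef_neg_Lmat_iff _ _ _ _ γ hPsymm hQp.1).2 fun x v hxv => ?_⟩
  obtain ⟨u, rfl⟩ := exists_window_eq v
  rw [lmiForm_lift_mul]
  refine sum_neg' (fun i _ => lmiForm_nonpos _ _ _ _ γ hL _ _) ?_
  rcases hxv with hx | hu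
  · exact ⟨0, mem_range.2 hp, hblock_neg _ _ (Or.inl hx)⟩
  · obtain ⟨i, hi, hne⟩ := exists_window_ne_zero hu
    exact ⟨i, hi, hblock_neg _ _ (Or.inr hne)⟩

/-- if the LMI holds for the N-lifted system with copositive Q, it holds for
the pN-lifted system with the block-diagonal matrix diag(Q,…,Q) (p copies), which is
again copositive. -/
theorem stmt_4 (n nw nz : ℕ)
    (A : Matrix (Fin n) (Fin n) ℝ) (B : Matrix (Fin n) (Fin nw) ℝ)
    (C : Matrix (Fin nz) (Fin n) ℝ) (D : Matrix (Fin nz) (Fin nw) ℝ)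
    (N : ℕ) (hN : 0 < N) (γ : ℝ) (hγ : 0 < γ)
    (P : Matrix (Fin n) (Fin n) ℝ) (hP : P.PosSemidef)
    (Q : Matrix (Fin N × Fin nw) (Fin N × Fin nw) ℝ) (hQ : Copositive Q)
    (hL : (-(Lmat (liftA A N) (liftB A B N) (liftC A C N) (liftD A B C D N)
        P Q γ)).PosDef) :
    ∀ p : ℕ, 0 < p →
      Copositive (Matrix.reindex (blockCopyEquiv p N (Fin nw)) (blockCopyEquiv p N (Fin nw))
          (Matrix.blockDiagonal fun _ : Fin p => Q)) ∧
      (-(Lmat (liftA A (p * N)) (liftB A B (p * N)) (liftC A C (p * N))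
          (liftD A B C D (p * N)) P
          (Matrix.reindex (blockCopyEquiv p N (Fin nw)) (blockCopyEquiv p N (Fin nw))
            (Matrix.blockDiagonal fun _ : Fin p => Q)) γ)).PosDef :=
  stmt_4_general n nw nz A B C D N γ P hP Q hQ hL

end
end

section
/- Let G be the discrete-time LTI system with matrices (A, B, C, D) where A is Schur–Cohn stable, and for N ∈ ℕ let D̂_N be the N-th order lifted feedthrough matrix. Then for every N ∈ ℕ, ‖D̂_N‖_{2+} ≤ ‖G‖_{2+}. -/
open Matrix

noncomputable section

/-!
Stability makes the impulse response `h 0 = D`, `h (m + 1) = C A^m B` absolutely summable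
(Gelfand's formula gives `‖A^m‖ ≤ r^m` eventually, for some `r < 1`), so Young's inequality
bounds the output energy: `‖z‖₂ ≤ ‖h‖₁ ‖w‖₂`. In particular the supremum defining `‖G‖_{2+}` is
over a bounded set. A nonnegative unit vector `v ∈ ℝ^{N n_w}` is fed in as the input
`w(0), …, w(N-1)` followed by zeros; as `D̂_N` is the block Toeplitz matrix of `h`, the first `N`
output samples are the blocks of `D̂_N v`, whence `|D̂_N v| ≤ ‖z‖₂ ≤ ‖G‖_{2+}`.
-/

open Filter Finset

theorem summable_norm_pow_of_spectralRadius_lt_one {𝔸 : Type*} [NormedRing 𝔸]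
    [NormedAlgebra ℂ 𝔸] [CompleteSpace 𝔸] {a : 𝔸} (ha : spectralRadius ℂ a < 1) :
    Summable fun n : ℕ => ‖a ^ n‖ := by
  obtain ⟨r, hρr, hr1⟩ := ENNReal.lt_iff_exists_nnreal_btwn.mp ha
  have hr1' : (r : ℝ) < 1 := by exact_mod_cast hr1
  refine .of_norm_bounded_eventually_nat (summable_geometric_of_lt_one r.coe_nonneg hr1') ?_
  filter_upwards [(spectrum.gelfand_formula a).eventually_lt_const hρr,
    eventually_ge_atTop 1] with n hn hn1
  have hn0 : (0 : ℝ) < n := by exact_mod_cast hn1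
  rw [one_div, ENNReal.rpow_inv_lt_iff hn0, ENNReal.rpow_natCast, ← ENNReal.coe_pow,
    ENNReal.coe_lt_coe] at hn
  rw [norm_norm]
  exact_mod_cast hn.le

section YoungInequality

variable {a u : ℕ → ℝ}

theorem sq_sum_range_mul_le (ha0 : ∀ k, 0 ≤ a k) (ha : Summable a) (n : ℕ) :
    (∑ k ∈ range (n + 1), u k * a (n - k)) ^ 2
      ≤ (∑' k, a k) * ∑ k ∈ range (n + 1), u k ^ 2 * a (n - k) := by
  have hcs := sum_sq_le_sum_mul_sum_of_sq_le_mul (range (n + 1))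
    (r := fun k => u k * a (n - k)) (f := fun k => a (n - k)) (g := fun k => u k ^ 2 * a (n - k))
    (fun _ _ => ha0 _) (fun _ _ => mul_nonneg (sq_nonneg _) (ha0 _)) (fun _ _ => le_of_eq (by ring))
  have hmass : ∑ k ∈ range (n + 1), a (n - k) ≤ ∑' k, a k := by
    have hreflect := sum_range_reflect a (n + 1)
    simp only [Nat.add_sub_cancel] at hreflect
    rw [hreflect]
    exact ha.sum_le_tsum _ fun k _ => ha0 k
  exact hcs.trans (mul_le_mul_of_nonneg_right hmass
    (sum_nonneg fun _ _ => mul_nonneg (sq_nonneg _) (ha0 _)))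

theorem summable_sq_sum_range_mul_and_tsum_le (ha0 : ∀ k, 0 ≤ a k) (ha : Summable a)
    (hu : Summable fun k => u k ^ 2) :
    Summable (fun n => (∑ k ∈ range (n + 1), u k * a (n - k)) ^ 2) ∧
      ∑' n, (∑ k ∈ range (n + 1), u k * a (n - k)) ^ 2 ≤ (∑' k, a k) ^ 2 * ∑' k, u k ^ 2 := by
  have hcauchy := hasSum_sum_range_mul_of_summable_norm (f := fun k => u k ^ 2) (g := a)
    hu.norm ha.norm
  have hmajorant := hcauchy.mul_left (∑' k, a k)
  have hle := sq_sum_range_mul_le (u := u) ha0 ha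
  have hsummable := Summable.of_nonneg_of_le (fun n => sq_nonneg _) hle hmajorant.summable
  refine ⟨hsummable, ?_⟩
  calc ∑' n, (∑ k ∈ range (n + 1), u k * a (n - k)) ^ 2
      ≤ ∑' n, (∑' k, a k) * ∑ k ∈ range (n + 1), u k ^ 2 * a (n - k) :=
        hsummable.tsum_le_tsum hle hmajorant.summable
    _ = (∑' k, a k) ^ 2 * ∑' k, u k ^ 2 := by rw [hmajorant.tsum_eq]; ring

end YoungInequality

section VecNorm

variable {ι κ : Type*} [Fintype ι] [Fintype κ]

theorem vecNorm_eq_norm_toLp (v : ι → ℝ) : vecNorm v = ‖WithLp.toLp 2 v‖ := by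
  simp [vecNorm, EuclideanSpace.norm_eq]

theorem vecNorm_nonneg (v : ι → ℝ) : 0 ≤ vecNorm v := Real.sqrt_nonneg _

theorem vecNorm_sq (v : ι → ℝ) : vecNorm v ^ 2 = ∑ i, v i ^ 2 :=
  Real.sq_sqrt (sum_nonneg fun _ _ => sq_nonneg _)

theorem vecNorm_sum_le {α : Type*} (s : Finset α) (v : α → ι → ℝ) :
    vecNorm (∑ j ∈ s, v j) ≤ ∑ j ∈ s, vecNorm (v j) := by
  simp only [vecNorm_eq_norm_toLp, WithLp.toLp_sum]
  exact norm_sum_le _ _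

open scoped Matrix.Norms.Frobenius in
theorem vecNorm_mulVec_le (M : Matrix ι κ ℝ) (v : κ → ℝ) :
    vecNorm (M *ᵥ v) ≤ ‖M‖ * vecNorm v := by
  simp only [vecNorm_eq_norm_toLp, ← frobenius_norm_replicateCol (ι := Unit),
    replicateCol_mulVec]
  exact frobenius_norm_mul _ _

theorem sigNorm_eq_sqrt_tsum_vecNorm_sq (u : ℕ → ι → ℝ) :
    sigNorm u = √(∑' k, vecNorm (u k) ^ 2) := by
  simp only [sigNorm, vecNorm_sq]

end VecNorm

section ImpulseResponse

variable {n w z : Type*} [Fintype n] [DecidableEq n]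
  (A : Matrix n n ℝ) (B : Matrix n w ℝ) (C : Matrix z n ℝ) (D : Matrix z w ℝ)

def impulseResponse : ℕ → Matrix z w ℝ
  | 0 => D
  | m + 1 => C * A ^ m * B

theorem liftD_apply {N : ℕ} (r : Fin N × z) (c : Fin N × w) :
    liftD A B C D N r c =
      if (c.1 : ℕ) ≤ r.1 then impulseResponse A B C D (r.1 - c.1) r.2 c.2 else 0 := by
  simp only [liftD, of_apply]
  split_ifs with h₁ h₂ <;> try first | omega | rfl
  · rw [h₁, Nat.sub_self, impulseResponse]
  · conv_rhs => rw [show (r.1 : ℕ) - c.1 = r.1 - c.1 - 1 + 1 by omega]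
    rfl

end ImpulseResponse

section SchurStable

variable {n : Type*} [Fintype n] [DecidableEq n] {A : Matrix n n ℝ}

open scoped Matrix.Norms.Frobenius

theorem SchurStable.summable_norm_pow (hA : SchurStable A) :
    Summable fun k : ℕ => ‖A ^ k‖ := by
  refine (summable_norm_pow_of_spectralRadius_lt_one hA).congr fun k => ?_
  rw [← Matrix.map_pow]
  exact frobenius_norm_map_eq _ _ fun x => Complex.norm_real x

theorem SchurStable.summable_norm_impulseResponse {w z : Type*} [Fintype w] [Fintype z]
    (hA : SchurStable A) (B : Matrix n w ℝ) (C : Matrix z n ℝ) (D : Matrix z w ℝ) :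
    Summable fun m => ‖impulseResponse A B C D m‖ := by
  refine (summable_nat_add_iff 1).mp <|
    .of_nonneg_of_le (fun _ => norm_nonneg _) (fun m => ?_)
      ((hA.summable_norm_pow.mul_left ‖C‖).mul_right ‖B‖)
  calc ‖C * A ^ m * B‖ ≤ ‖C * A ^ m‖ * ‖B‖ := frobenius_norm_mul _ _
    _ ≤ ‖C‖ * ‖A ^ m‖ * ‖B‖ := by gcongr; exact frobenius_norm_mul _ _

end SchurStable

section LTI

variable {n w z : Type*} [Fintype n] [Fintype w] [Fintype z] [DecidableEq n]
  (A : Matrix n n ℝ) (B : Matrix n w ℝ) (C : Matrix z n ℝ) (D : Matrix z w ℝ)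

theorem ltiState_eq_sum (ws : ℕ → w → ℝ) (k : ℕ) :
    ltiState A B ws k = ∑ j ∈ range k, (A ^ (k - 1 - j) * B) *ᵥ ws j := by
  induction k with
  | zero => rfl
  | succ k ih =>
    rw [ltiState, ih, mulVec_sum, sum_range_succ, Nat.add_sub_cancel, Nat.sub_self, pow_zero,
      Matrix.one_mul]
    congr 1
    refine sum_congr rfl fun j hj => ?_
    rw [mulVec_mulVec, ← Matrix.mul_assoc, ← pow_succ',
      show k - 1 - j + 1 = k - j by have := mem_range.mp hj; omega]

theorem ltiOutput_eq_sum_impulseResponse (ws : ℕ → w → ℝ) (k : ℕ) :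
    ltiOutput A B C D ws k = ∑ j ∈ range (k + 1), impulseResponse A B C D (k - j) *ᵥ ws j := by
  rw [ltiOutput, ltiState_eq_sum, mulVec_sum, sum_range_succ, Nat.sub_self]
  congr 1
  refine sum_congr rfl fun j hj => ?_
  obtain ⟨m, hm⟩ : ∃ m, k - j = m + 1 := ⟨k - 1 - j, by have := mem_range.mp hj; omega⟩
  rw [hm, impulseResponse, mulVec_mulVec, Matrix.mul_assoc, show k - 1 - j = m by omega]

open scoped Matrix.Norms.Frobenius in
theorem vecNorm_ltiOutput_le (ws : ℕ → w → ℝ) (k : ℕ) :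
    vecNorm (ltiOutput A B C D ws k)
      ≤ ∑ j ∈ range (k + 1), vecNorm (ws j) * ‖impulseResponse A B C D (k - j)‖ := by
  rw [ltiOutput_eq_sum_impulseResponse]
  refine (vecNorm_sum_le _ _).trans (sum_le_sum fun j _ => ?_)
  rw [mul_comm]
  exact vecNorm_mulVec_le _ _

open scoped Matrix.Norms.Frobenius in
theorem summable_and_sigNorm_ltiOutput_le
    (hh : Summable fun m => ‖impulseResponse A B C D m‖) (ws : ℕ → w → ℝ)
    (hw : Summable fun k => ∑ i, ws k i ^ 2) :
    Summable (fun k => ∑ i, ltiOutput A B C D ws k i ^ 2) ∧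
      sigNorm (ltiOutput A B C D ws) ≤ (∑' m, ‖impulseResponse A B C D m‖) * sigNorm ws := by
  simp only [← vecNorm_sq] at hw ⊢
  obtain ⟨hconv, hconv_le⟩ :=
    summable_sq_sum_range_mul_and_tsum_le (fun _ => norm_nonneg _) hh hw
  have hle : ∀ k, vecNorm (ltiOutput A B C D ws k) ^ 2
      ≤ (∑ j ∈ range (k + 1), vecNorm (ws j) * ‖impulseResponse A B C D (k - j)‖) ^ 2 :=
    fun k => pow_le_pow_left₀ (vecNorm_nonneg _) (vecNorm_ltiOutput_le A B C D ws k) 2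
  have hz := Summable.of_nonneg_of_le (fun _ => sq_nonneg _) hle hconv
  refine ⟨hz, ?_⟩
  rw [sigNorm_eq_sqrt_tsum_vecNorm_sq, sigNorm_eq_sqrt_tsum_vecNorm_sq,
    ← Real.sqrt_sq (tsum_nonneg fun _ => norm_nonneg _ : 0 ≤ ∑' m, ‖impulseResponse A B C D m‖),
    ← Real.sqrt_mul (sq_nonneg _)]
  exact Real.sqrt_le_sqrt ((hz.tsum_le_tsum hle hconv).trans hconv_le)

end LTI

section Lifting

variable {N : ℕ} {ι : Type*}

def signalOfBlocks (v : Fin N × ι → ℝ) : ℕ → ι → ℝ :=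
  fun k i => if h : k < N then v (⟨k, h⟩, i) else 0

theorem signalOfBlocks_coe (v : Fin N × ι → ℝ) (j : Fin N) (i : ι) :
    signalOfBlocks v j i = v (j, i) := by
  simp [signalOfBlocks]

theorem signalOfBlocks_nonneg {v : Fin N × ι → ℝ} (hv : ∀ p, 0 ≤ v p) (k : ℕ) (i : ι) :
    0 ≤ signalOfBlocks v k i := by
  unfold signalOfBlocks
  split_ifs
  exacts [hv _, le_rfl]

theorem sum_fin_prod_eq_sum_range [Fintype ι] (F : ℕ → ι → ℝ) :
    ∑ p : Fin N × ι, F p.1 p.2 = ∑ k ∈ range N, ∑ i, F k i := by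
  rw [Fintype.sum_prod_type]
  exact Fin.sum_univ_eq_sum_range (fun k => ∑ i, F k i) N

theorem hasSum_sum_sq_signalOfBlocks [Fintype ι] (v : Fin N × ι → ℝ) :
    HasSum (fun k => ∑ i, signalOfBlocks v k i ^ 2) (vecNorm v ^ 2) := by
  have hsupp : ∀ k ∉ range N, ∑ i, signalOfBlocks v k i ^ 2 = 0 := fun k hk => by
    simp [signalOfBlocks, show ¬k < N by simpa using hk]
  have hsum : HasSum (fun k => ∑ i, signalOfBlocks v k i ^ 2)
      (∑ k ∈ range N, ∑ i, signalOfBlocks v k i ^ 2) :=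
    hasSum_sum_of_ne_finset_zero hsupp
  rw [← sum_fin_prod_eq_sum_range (fun k i => signalOfBlocks v k i ^ 2)] at hsum
  simpa only [signalOfBlocks_coe, vecNorm_sq] using hsum

variable {n w z : Type*} [Fintype n] [Fintype w] [Fintype z] [DecidableEq n]
  (A : Matrix n n ℝ) (B : Matrix n w ℝ) (C : Matrix z n ℝ) (D : Matrix z w ℝ)

theorem ltiOutput_signalOfBlocks (v : Fin N × w → ℝ) {k : ℕ} (hk : k < N) (i : z) :
    ltiOutput A B C D (signalOfBlocks v) k i = (liftD A B C D N *ᵥ v) (⟨k, hk⟩, i) := by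
  set h := impulseResponse A B C D
  set s := signalOfBlocks v
  have hrange : (range N).filter (· ≤ k) = range (k + 1) := by
    ext j; simp only [mem_filter, mem_range]; omega
  calc ltiOutput A B C D s k i = ∑ j ∈ range (k + 1), (h (k - j) *ᵥ s j) i := by
        rw [ltiOutput_eq_sum_impulseResponse, Finset.sum_apply]
    _ = ∑ j ∈ range N, ∑ c, (if j ≤ k then h (k - j) i c else 0) * s j c := by
        rw [← hrange, sum_filter]
        refine sum_congr rfl fun j _ => ?_
        split_ifs
        · rfl
        · simp
    _ = ∑ p : Fin N × w, liftD A B C D N (⟨k, hk⟩, i) p * v p := by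
        rw [← sum_fin_prod_eq_sum_range (fun j c => (if j ≤ k then h (k - j) i c else 0) * s j c)]
        simp only [liftD_apply, s, signalOfBlocks_coe]
        rfl

end Lifting

section Gain

variable {n w z : Type*} [Fintype n] [Fintype w] [Fintype z]
  (A : Matrix n n ℝ) (B : Matrix n w ℝ) (C : Matrix z n ℝ) (D : Matrix z w ℝ)

theorem posL2Gain_nonneg : 0 ≤ posL2Gain A B C D :=
  Real.sSup_nonneg fun _ ⟨_, _, _, _, hc⟩ => hc ▸ Real.sqrt_nonneg _

variable [DecidableEq n]

open scoped Matrix.Norms.Frobenius in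
theorem sigNorm_ltiOutput_le_posL2Gain (hh : Summable fun m => ‖impulseResponse A B C D m‖)
    {ws : ℕ → w → ℝ} (hpos : ∀ k i, 0 ≤ ws k i) (hw : Summable fun k => ∑ i, ws k i ^ 2)
    (hnorm : sigNorm ws = 1) :
    sigNorm (ltiOutput A B C D ws) ≤ posL2Gain A B C D := by
  refine le_csSup ⟨∑' m, ‖impulseResponse A B C D m‖, ?_⟩ ⟨ws, hpos, hw, hnorm, rfl⟩
  rintro _ ⟨ws', -, hw', hnorm', rfl⟩
  simpa [hnorm'] using (summable_and_sigNorm_ltiOutput_le A B C D hh ws' hw').2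

open scoped Matrix.Norms.Frobenius in
theorem vecNorm_liftD_mulVec_le_sigNorm (hh : Summable fun m => ‖impulseResponse A B C D m‖)
    {N : ℕ} (v : Fin N × w → ℝ) :
    vecNorm (liftD A B C D N *ᵥ v) ≤ sigNorm (ltiOutput A B C D (signalOfBlocks v)) := by
  have hy := (summable_and_sigNorm_ltiOutput_le A B C D hh _
    (hasSum_sum_sq_signalOfBlocks v).summable).1
  have hfinite : vecNorm (liftD A B C D N *ᵥ v) ^ 2
      = ∑ k ∈ range N, ∑ i, ltiOutput A B C D (signalOfBlocks v) k i ^ 2 := by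
    rw [vecNorm_sq, ← sum_fin_prod_eq_sum_range]
    exact sum_congr rfl fun p _ => by rw [ltiOutput_signalOfBlocks A B C D v p.1.isLt]
  refine Real.le_sqrt_of_sq_le ?_
  rw [hfinite]
  exact hy.sum_le_tsum _ fun _ _ => sum_nonneg fun _ _ => sq_nonneg _

end Gain

/-- the positive maximal singular value of the lifted feedthrough matrix
D̂_N is a lower bound of the positive l2 induced norm of G. -/
theorem stmt_7 (n nw nz : ℕ)
    (A : Matrix (Fin n) (Fin n) ℝ) (B : Matrix (Fin n) (Fin nw) ℝ)
    (C : Matrix (Fin nz) (Fin n) ℝ) (D : Matrix (Fin nz) (Fin nw) ℝ)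
    (hA : SchurStable A) :
    ∀ N : ℕ, matPosNorm (liftD A B C D N) ≤ posL2Gain A B C D := by
  intro N
  have hh := hA.summable_norm_impulseResponse B C D
  refine Real.sSup_le ?_ (posL2Gain_nonneg A B C D)
  rintro _ ⟨v, hv, hv1, rfl⟩
  have hsum := hasSum_sum_sq_signalOfBlocks v
  have hnorm : sigNorm (signalOfBlocks v) = 1 := by
    rw [sigNorm, hsum.tsum_eq, hv1, one_pow, Real.sqrt_one]
  exact (vecNorm_liftD_mulVec_le_sigNorm A B C D hh v).trans
    (sigNorm_ltiOutput_le_posL2Gain A B C D hh (signalOfBlocks_nonneg hv) hsum.summable hnorm)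
end
end
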